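/- arXiv:2605.10407 — 7 statements merged into one kernel-verified Lean document; each statement's English description precedes it below -/
import Mathlib

section
/- The identified set of distributions compatible with a top-K observation (head conditional α fixed, tail mass t ∈ [0, U_K], per-token tail cap p_u ≤ (1−t)·exp(τ)/Z_A) has total-variation diameter exactly U_K = M·exp(τ)/(Z_A + M·exp(τ)), provided M ≥ 1. -/
open Finset Real

/-- the identified set under top-K censoring has TV diameter
exactly `U_K = M·exp(τ)/(Z_A + M·exp(τ))`. -/
theorem identified_set_tv_diameter (V K : ℕ) (hK : 1 ≤ K) (hKV : K + 1 ≤ V)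
    (A : Finset (Fin V)) (hA : A.card = K)
    (z : Fin V → ℝ) (τ : ℝ) (hτ : ∀ v ∈ A, τ ≤ z v)
    (ZA M UK : ℝ)
    (hZA : ZA = ∑ v ∈ A, Real.exp (z v))
    (hM : M = ((V - K : ℕ) : ℝ))
    (hUK : UK = M * Real.exp τ / (ZA + M * Real.exp τ)) :
    IsGreatest
      {d : ℝ |
        ∃ p q : Fin V → ℝ,
          (∃ t : ℝ, 0 ≤ t ∧ t ≤ UK ∧
            (∀ v ∈ A, p v = (1 - t) * Real.exp (z v) / ZA) ∧
            (∑ u ∈ Aᶜ, p u = t) ∧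
            (∀ u ∉ A, 0 ≤ p u ∧ p u ≤ (1 - t) * Real.exp τ / ZA)) ∧
          (∃ s : ℝ, 0 ≤ s ∧ s ≤ UK ∧
            (∀ v ∈ A, q v = (1 - s) * Real.exp (z v) / ZA) ∧
            (∑ u ∈ Aᶜ, q u = s) ∧
            (∀ u ∉ A, 0 ≤ q u ∧ q u ≤ (1 - s) * Real.exp τ / ZA)) ∧
          d = (1 / 2) * ∑ v, |p v - q v|}
      UK := by
  have hAne : A.Nonempty := Finset.card_pos.mp (by rw [hA]; omega)
  have hZApos : 0 < ZA := by
    rw [hZA]; exact Finset.sum_pos (fun v _ => Real.exp_pos _) hAne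
  have hZAne : ZA ≠ 0 := ne_of_gt hZApos
  have hM1 : (1 : ℝ) ≤ M := by
    rw [hM]; exact_mod_cast Nat.one_le_iff_ne_zero.mpr (by omega)
  have hMpos : 0 < M := lt_of_lt_of_le one_pos hM1
  have hMne : M ≠ 0 := ne_of_gt hMpos
  have hden : 0 < ZA + M * Real.exp τ :=
    add_pos hZApos (mul_pos hMpos (Real.exp_pos τ))
  have hdenne : ZA + M * Real.exp τ ≠ 0 := ne_of_gt hden
  have hUK0 : 0 ≤ UK := by
    rw [hUK]; exact div_nonneg (by positivity) hden.le
  have hcap : UK / M = (1 - UK) * Real.exp τ / ZA := by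
    rw [hUK]; field_simp; ring
  have hcardC : (Aᶜ).card = V - K := by
    simp [Finset.card_compl, hA]
  have hsumZ : ∑ v ∈ A, Real.exp (z v) / ZA = 1 := by
    rw [← Finset.sum_div, ← hZA, div_self hZAne]
  constructor
  · -- membership
    set p : Fin V → ℝ := fun v => if v ∈ A then Real.exp (z v) / ZA else 0 with hp
    set q : Fin V → ℝ := fun v => if v ∈ A then (1 - UK) * Real.exp (z v) / ZA else UK / M with hq
    refine ⟨p, q, ⟨0, le_refl 0, hUK0, ?_, ?_, ?_⟩, ⟨UK, hUK0, le_refl UK, ?_, ?_, ?_⟩, ?_⟩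
    · intro v hv; simp [hp, hv]
    · refine Finset.sum_eq_zero fun u hu => ?_
      simp [hp, Finset.mem_compl.mp hu]
    · intro u hu
      rw [hp]; simp only [if_neg hu]
      exact ⟨le_refl 0, by positivity⟩
    · intro v hv; simp [hq, hv]
    · have : ∑ u ∈ Aᶜ, q u = ∑ u ∈ Aᶜ, UK / M :=
        Finset.sum_congr rfl fun u hu => by simp [hq, Finset.mem_compl.mp hu]
      rw [this, Finset.sum_const, hcardC, nsmul_eq_mul, ← hM]
      field_simp
    · intro u hu
      rw [hq]; simp only [if_neg hu]
      exact ⟨div_nonneg hUK0 hMpos.le, le_of_eq hcap⟩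
    · have hsA : ∑ v ∈ A, |p v - q v| = UK := by
        have : ∀ v ∈ A, |p v - q v| = UK * (Real.exp (z v) / ZA) := by
          intro v hv
          simp only [hp, hq, if_pos hv]
          rw [abs_of_nonneg]
          · ring
          · have := Real.exp_pos (z v)
            have h1 : Real.exp (z v) / ZA - (1 - UK) * Real.exp (z v) / ZA
                = UK * (Real.exp (z v) / ZA) := by ring
            rw [h1]; positivity
        rw [Finset.sum_congr rfl this, ← Finset.mul_sum, hsumZ, mul_one]
      have hsC : ∑ u ∈ Aᶜ, |p u - q u| = UK := by
        have h : ∀ u ∈ Aᶜ, |p u - q u| = UK / M := by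
          intro u hu
          simp only [hp, hq, if_neg (Finset.mem_compl.mp hu)]
          have hnn : (0 : ℝ) ≤ UK / M := div_nonneg hUK0 hMpos.le
          rw [abs_of_nonpos (by linarith)]
          ring
        rw [Finset.sum_congr rfl h, Finset.sum_const, hcardC, nsmul_eq_mul, ← hM]
        field_simp
      have := Finset.sum_add_sum_compl A (fun v => |p v - q v|)
      rw [← this, hsA, hsC]; ring
  · -- upper bound
    rintro d ⟨p, q, ⟨t, ht0, htU, hpA, hpC, hpcap⟩, ⟨s, hs0, hsU, hqA, hqC, hqcap⟩, hd⟩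
    have hsA : ∑ v ∈ A, |p v - q v| = |t - s| := by
      have : ∀ v ∈ A, |p v - q v| = |t - s| * (Real.exp (z v) / ZA) := by
        intro v hv
        rw [hpA v hv, hqA v hv]
        have h1 : (1 - t) * Real.exp (z v) / ZA - (1 - s) * Real.exp (z v) / ZA
            = (s - t) * (Real.exp (z v) / ZA) := by ring
        rw [h1, abs_mul, abs_of_nonneg (div_nonneg (Real.exp_pos (z v)).le hZApos.le),
          abs_sub_comm]
      rw [Finset.sum_congr rfl this, ← Finset.mul_sum, hsumZ, mul_one]
    have hsC : ∑ u ∈ Aᶜ, |p u - q u| ≤ t + s := by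
      calc ∑ u ∈ Aᶜ, |p u - q u| ≤ ∑ u ∈ Aᶜ, (p u + q u) := by
            refine Finset.sum_le_sum fun u hu => ?_
            have hu' := Finset.mem_compl.mp hu
            have h1 := (hpcap u hu').1
            have h2 := (hqcap u hu').1
            rw [abs_sub_le_iff]; constructor <;> linarith
        _ = t + s := by rw [Finset.sum_add_distrib, hpC, hqC]
    have habs : |t - s| ≤ 2 * UK - (t + s) := by
      rcases le_total t s with h | h
      · rw [abs_of_nonpos (by linarith)]; linarith
      · rw [abs_of_nonneg (by linarith)]; linarith
    have hsplit := Finset.sum_add_sum_compl A (fun v => |p v - q v|)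
    rw [hd, ← hsplit, hsA]
    linarith
end

section
/- Under a normalized log-probability API where the head mass P_A = Σ_{v∈A} p_v is known exactly and each censored token satisfies p_u ≤ c, the TV diameter of the set of compatible distributions is at most t* = 1 − P_A, with equality whenever M ≥ 2⌈t*/c⌉ (so that two feasible tail allocations with disjoint supports exist). -/
open Finset

/-- under normalized access, the TV diameter of the compatible
set is at most the hidden tail mass `t* = 1 − P_A`, with equality whenever
`M ≥ 2⌈t*/c⌉`. -/
theorem normalized_tv_diameter (V K M : ℕ) (A : Finset (Fin V)) (hA : A.card = K)
    (hM : M = V - K) (pobs : Fin V → ℝ) (c tstar : ℝ)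
    (hpobs : ∀ v ∈ A, 0 ≤ pobs v)
    (htstar : tstar = 1 - ∑ v ∈ A, pobs v)
    (ht0 : 0 ≤ tstar) (hc : 0 < c) (hfeas : tstar ≤ (M : ℝ) * c) :
    (∀ p q : Fin V → ℝ,
        (∀ v ∈ A, p v = pobs v) → (∀ u ∉ A, 0 ≤ p u ∧ p u ≤ c) →
        (∑ v, p v = 1) →
        (∀ v ∈ A, q v = pobs v) → (∀ u ∉ A, 0 ≤ q u ∧ q u ≤ c) →
        (∑ v, q v = 1) →
        (1 / 2) * ∑ v, |p v - q v| ≤ tstar) ∧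
    (M ≥ 2 * ⌈tstar / c⌉₊ →
      ∃ p q : Fin V → ℝ,
        (∀ v ∈ A, p v = pobs v) ∧ (∀ u ∉ A, 0 ≤ p u ∧ p u ≤ c) ∧
        (∑ v, p v = 1) ∧
        (∀ v ∈ A, q v = pobs v) ∧ (∀ u ∉ A, 0 ≤ q u ∧ q u ≤ c) ∧
        (∑ v, q v = 1) ∧
        (1 / 2) * ∑ v, |p v - q v| = tstar) := by
  have tail_sum : ∀ p : Fin V → ℝ, (∀ v ∈ A, p v = pobs v) → (∑ v, p v = 1) →
      ∑ v ∈ Aᶜ, p v = tstar := by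
    intro p hpA hps
    have h := Finset.sum_add_sum_compl A p
    have h1 : ∑ v ∈ A, p v = ∑ v ∈ A, pobs v := Finset.sum_congr rfl hpA
    rw [hps, h1] at h
    linarith
  constructor
  · intro p q hpA hpc hps hqA hqc hqs
    have hp := tail_sum p hpA hps
    have hq := tail_sum q hqA hqs
    have h0 : ∑ v ∈ A, |p v - q v| = 0 := by
      apply Finset.sum_eq_zero
      intro v hv
      rw [hpA v hv, hqA v hv, sub_self, abs_zero]
    have hsplit := Finset.sum_add_sum_compl A (fun v => |p v - q v|)
    have hle : ∑ v ∈ Aᶜ, |p v - q v| ≤ ∑ v ∈ Aᶜ, (p v + q v) := by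
      apply Finset.sum_le_sum
      intro v hv
      have hvn : v ∉ A := Finset.mem_compl.mp hv
      have h1 := (hpc v hvn).1
      have h2 := (hqc v hvn).1
      rw [abs_le]
      constructor <;> linarith
    rw [Finset.sum_add_distrib, hp, hq] at hle
    simp only [h0, zero_add] at hsplit
    linarith
  · intro hM2
    set n := ⌈tstar / c⌉₊ with hn
    have hAc_card : Aᶜ.card = M := by
      rw [Finset.card_compl, hA, Fintype.card_fin, hM]
    rcases eq_or_lt_of_le ht0 with ht | ht
    · -- tstar = 0 : take p = q
      refine ⟨(fun v => if v ∈ A then pobs v else 0),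
        (fun v => if v ∈ A then pobs v else 0), ?_, ?_, ?_, ?_, ?_, ?_, ?_⟩
      · intro v hv; simp [hv]
      · intro u hu; simp [hu, hc.le]
      · rw [Finset.sum_ite_mem, Finset.univ_inter]; linarith
      · intro v hv; simp [hv]
      · intro u hu; simp [hu, hc.le]
      · rw [Finset.sum_ite_mem, Finset.univ_inter]; linarith
      · simp [← ht]
    · -- tstar > 0
      have hn0 : 0 < n := Nat.ceil_pos.mpr (div_pos ht hc)
      have hnR : (0:ℝ) < (n:ℝ) := by exact_mod_cast hn0
      have hnne : (n:ℝ) ≠ 0 := ne_of_gt hnR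
      have hdiv_nonneg : 0 ≤ tstar / n := div_nonneg ht0 hnR.le
      have hdiv_le : tstar / n ≤ c := by
        have h1 : tstar / c ≤ (n:ℝ) := Nat.le_ceil _
        rw [div_le_iff₀ hnR]
        rw [div_le_iff₀ hc] at h1
        linarith [mul_comm (n:ℝ) c]
      have hSn : n ≤ Aᶜ.card := by rw [hAc_card]; omega
      obtain ⟨S, hS_sub, hS_card⟩ := Finset.exists_subset_card_eq hSn
      have hTn : n ≤ (Aᶜ \ S).card := by
        rw [Finset.card_sdiff_of_subset hS_sub, hAc_card, hS_card]; omega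
      obtain ⟨T, hT_sub, hT_card⟩ := Finset.exists_subset_card_eq hTn
      have hT_Ac : T ⊆ Aᶜ := hT_sub.trans (Finset.sdiff_subset)
      have hST : ∀ v, v ∈ S → v ∉ T := by
        intro v hvS hvT
        exact (Finset.mem_sdiff.mp (hT_sub hvT)).2 hvS
      have hSA : ∀ v, v ∈ A → v ∉ S := fun v hv hvS =>
        (Finset.mem_compl.mp (hS_sub hvS)) hv
      have hTA : ∀ v, v ∈ A → v ∉ T := fun v hv hvT =>
        (Finset.mem_compl.mp (hT_Ac hvT)) hv
      set x := tstar / (n:ℝ) with hx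
      have hsum_ite : ∀ U : Finset (Fin V), U.card = n →
          ∑ v, (if v ∈ U then x else 0) = tstar := by
        intro U hU
        rw [Finset.sum_ite_mem, Finset.univ_inter, Finset.sum_const, hU,
          nsmul_eq_mul, hx, mul_div_cancel₀ _ hnne]
      refine ⟨(fun v => if v ∈ A then pobs v else if v ∈ S then x else 0),
        (fun v => if v ∈ A then pobs v else if v ∈ T then x else 0),
        ?_, ?_, ?_, ?_, ?_, ?_, ?_⟩
      · intro v hv; simp [hv]
      · intro u hu
        simp only [hu, if_false]
        split <;> exact ⟨by first | exact hdiv_nonneg | exact le_refl 0, by first | exact hdiv_le | exact hc.le⟩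
      · have hpt : ∀ v, (if v ∈ A then pobs v else if v ∈ S then x else 0)
            = (if v ∈ A then pobs v else 0) + (if v ∈ S then x else 0) := by
          intro v
          by_cases hv : v ∈ A
          · simp [hv, hSA v hv]
          · simp [hv]
        rw [Finset.sum_congr rfl (fun v _ => hpt v), Finset.sum_add_distrib,
          Finset.sum_ite_mem, Finset.univ_inter, hsum_ite S hS_card]
        linarith
      · intro v hv; simp [hv]
      · intro u hu
        simp only [hu, if_false]
        split <;> exact ⟨by first | exact hdiv_nonneg | exact le_refl 0, by first | exact hdiv_le | exact hc.le⟩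
      · have hpt : ∀ v, (if v ∈ A then pobs v else if v ∈ T then x else 0)
            = (if v ∈ A then pobs v else 0) + (if v ∈ T then x else 0) := by
          intro v
          by_cases hv : v ∈ A
          · simp [hv, hTA v hv]
          · simp [hv]
        rw [Finset.sum_congr rfl (fun v _ => hpt v), Finset.sum_add_distrib,
          Finset.sum_ite_mem, Finset.univ_inter, hsum_ite T hT_card]
        linarith
      · have habs : ∀ v, |(if v ∈ A then pobs v else if v ∈ S then x else 0)
            - (if v ∈ A then pobs v else if v ∈ T then x else 0)|
            = (if v ∈ S then x else 0) + (if v ∈ T then x else 0) := by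
          intro v
          by_cases hv : v ∈ A
          · simp [hv, hSA v hv, hTA v hv]
          · by_cases hvS : v ∈ S
            · simp [hv, hvS, hST v hvS, abs_of_nonneg hdiv_nonneg]
            · by_cases hvT : v ∈ T
              · simp [hv, hvS, hvT, abs_of_nonneg hdiv_nonneg]
              · simp [hv, hvS, hvT]
        rw [Finset.sum_congr rfl (fun v _ => habs v), Finset.sum_add_distrib,
          hsum_ite S hS_card, hsum_ite T hT_card]
        ring
end

section
/- For any s ∈ (0,1) and U ∈ (0,1), the maximum of max(−log(1−s), (1−U)log((1−U)/(1−s)) + U·log(U/s)) over s is minimized at s* = A_U/(1+A_U) with A_U = U(1−U)^((1−U)/U), and the minimal value is R_bin(U) = −log(1−s*). -/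
open Real Set

lemma aux_ident (U : ℝ) (hU0 : 0 < U) (hU1 : U < 1) :
    (1 - U) * Real.log ((1 - U) / (1 - (U * (1 - U) ^ ((1 - U) / U)) / (1 + U * (1 - U) ^ ((1 - U) / U))))
      + U * Real.log (U / ((U * (1 - U) ^ ((1 - U) / U)) / (1 + U * (1 - U) ^ ((1 - U) / U))))
    = -Real.log (1 - (U * (1 - U) ^ ((1 - U) / U)) / (1 + U * (1 - U) ^ ((1 - U) / U))) := by
  have hU1' : (0:ℝ) < 1 - U := by linarith
  set B : ℝ := (1 - U) ^ ((1 - U) / U) with hBdef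
  have hB0 : 0 < B := rpow_pos_of_pos hU1' _
  have hA0 : 0 < U * B := mul_pos hU0 hB0
  have h1A : 0 < 1 + U * B := by linarith
  have hp0 : 0 < U * B / (1 + U * B) := div_pos hA0 h1A
  have e1p : 1 - U * B / (1 + U * B) = 1 / (1 + U * B) := by field_simp; ring
  have h1p : 0 < 1 - U * B / (1 + U * B) := by rw [e1p]; positivity
  have elogB : Real.log B = (1 - U) / U * Real.log (1 - U) := Real.log_rpow hU1' _
  have e1 : Real.log (1 - U * B / (1 + U * B)) = -Real.log (1 + U * B) := by
    rw [e1p, one_div, Real.log_inv]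
  have e2 : Real.log (U * B / (1 + U * B)) = Real.log U + Real.log B - Real.log (1 + U * B) := by
    rw [Real.log_div (by positivity) (by positivity), Real.log_mul hU0.ne' hB0.ne']
  rw [Real.log_div hU1'.ne' h1p.ne', Real.log_div hU0.ne' hp0.ne', e1, e2, elogB]
  have : U * ((1 - U) / U * Real.log (1 - U)) = (1 - U) * Real.log (1 - U) := by
    field_simp
  linarith [this]

lemma aux_mono (U p s : ℝ) (hU0 : 0 < U) (hU1 : U < 1) (hp0 : 0 < p) (hpU : p < U)
    (hs0 : 0 < s) (hsp : s ≤ p) :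
    (1 - U) * Real.log ((1 - U) / (1 - p)) + U * Real.log (U / p)
      ≤ (1 - U) * Real.log ((1 - U) / (1 - s)) + U * Real.log (U / s) := by
  have hU1' : (0:ℝ) < 1 - U := by linarith
  have hp1 : p < 1 := by linarith
  have h1p : 0 < 1 - p := by linarith
  have h1s : 0 < 1 - s := by linarith
  have h1 : Real.log ((1 - s) / (1 - p)) ≤ (1 - s) / (1 - p) - 1 :=
    Real.log_le_sub_one_of_pos (by positivity)
  have h2 : Real.log (s / p) ≤ s / p - 1 :=
    Real.log_le_sub_one_of_pos (by positivity)
  rw [Real.log_div h1s.ne' h1p.ne'] at h1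
  rw [Real.log_div hs0.ne' hp0.ne'] at h2
  rw [Real.log_div hU1'.ne' h1p.ne', Real.log_div hU0.ne' hp0.ne',
    Real.log_div hU1'.ne' h1s.ne', Real.log_div hU0.ne' hs0.ne']
  have key : (1 - U) * ((1 - s) / (1 - p) - 1) + U * (s / p - 1) ≤ 0 := by
    have e : (1 - U) * ((1 - s) / (1 - p) - 1) + U * (s / p - 1)
        = ((p - s) * (p - U)) / ((1 - p) * p) := by
      field_simp
      ring
    rw [e]
    apply div_nonpos_of_nonpos_of_nonneg
    · nlinarith
    · positivity
  nlinarith [mul_le_mul_of_nonneg_left h1 hU1'.le, mul_le_mul_of_nonneg_left h2 hU0.le]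

/-- the binary endpoint minimax problem is minimized at
`s* = A_U/(1+A_U)`, with minimal value `R_bin(U) = −log(1−s*)`. -/
theorem binary_endpoint_minimax (U : ℝ) (hU0 : 0 < U) (hU1 : U < 1) :
    let AU : ℝ := U * (1 - U) ^ ((1 - U) / U)
    let sstar : ℝ := AU / (1 + AU)
    let f : ℝ → ℝ := fun s => -Real.log (1 - s)
    let g : ℝ → ℝ := fun s =>
      (1 - U) * Real.log ((1 - U) / (1 - s)) + U * Real.log (U / s)
    max (f sstar) (g sstar) = -Real.log (1 - sstar) ∧
      ∀ s ∈ Ioo (0 : ℝ) 1, -Real.log (1 - sstar) ≤ max (f s) (g s) := by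
  intro AU sstar f g
  have hU1' : (0:ℝ) < 1 - U := by linarith
  have hB0 : 0 < (1 - U) ^ ((1 - U) / U) := rpow_pos_of_pos hU1' _
  have hB1 : (1 - U) ^ ((1 - U) / U) < 1 :=
    rpow_lt_one hU1'.le (by linarith) (div_pos hU1' hU0)
  have hA0 : 0 < AU := mul_pos hU0 hB0
  have hAU : AU < U := by
    calc AU = U * (1 - U) ^ ((1 - U) / U) := rfl
    _ < U * 1 := by exact mul_lt_mul_of_pos_left hB1 hU0
    _ = U := mul_one U
  have h1A : (0:ℝ) < 1 + AU := by linarith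
  have hp0 : 0 < sstar := div_pos hA0 h1A
  have hpU : sstar < U := by
    have : sstar < AU := by
      rw [show sstar = AU / (1 + AU) from rfl, div_lt_iff₀ h1A]
      nlinarith
    linarith
  have hp1 : sstar < 1 := by linarith
  have hident : g sstar = f sstar := aux_ident U hU0 hU1
  constructor
  · rw [hident]; exact max_self _
  · intro s hs
    obtain ⟨hs0, hs1⟩ := hs
    rcases le_or_gt s sstar with h | h
    · calc -Real.log (1 - sstar) = g sstar := hident.symm
      _ ≤ g s := aux_mono U sstar s hU0 hU1 hp0 hpU hs0 h
      _ ≤ max (f s) (g s) := le_max_right _ _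
    · have hlog : Real.log (1 - s) ≤ Real.log (1 - sstar) :=
        Real.log_le_log (by linarith) (by linarith)
      have h2 : -Real.log (1 - sstar) ≤ f s := by
        show -Real.log (1 - sstar) ≤ -Real.log (1 - s)
        linarith
      exact h2.trans (le_max_left _ _)
end

section
/- As U → 0⁺, the binary endpoint reserve s* = A_U/(1+A_U) with A_U = U(1−U)^((1−U)/U) satisfies s* = U/e + O(U²); in particular |s* − U/e| ≤ U² for 0 < U ≤ 1/2. -/
set_option maxHeartbeats 1000000
open Real

/-- the binary endpoint reserve satisfies `s* = U/e + O(U²)`;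
in particular `|s* − U/e| ≤ U²` for `0 < U ≤ 1/2`. -/
theorem reserve_first_order (U : ℝ) (hU0 : 0 < U) (hU : U ≤ 1 / 2) :
    let AU : ℝ := U * (1 - U) ^ ((1 - U) / U)
    let sstar : ℝ := AU / (1 + AU)
    |sstar - U / Real.exp 1| ≤ U ^ 2 := by
  intro AU sstar
  have h1U : 0 < 1 - U := by linarith
  have hfrac : 0 < (1 - U) / U := div_pos h1U hU0
  have hrw : (1 - U) ^ ((1 - U) / U) = Real.exp ((1 - U) / U * Real.log (1 - U)) :=
    by rw [Real.rpow_def_of_pos h1U, mul_comm]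
  have hlog_le : Real.log (1 - U) ≤ -U := by
    have := Real.log_le_sub_one_of_pos h1U
    linarith
  have hlog_ge : -(U / (1 - U)) ≤ Real.log (1 - U) := by
    have h2 : Real.log (1 - U)⁻¹ ≤ (1 - U)⁻¹ - 1 :=
      Real.log_le_sub_one_of_pos (inv_pos.mpr h1U)
    rw [Real.log_inv] at h2
    have h3 : (1 - U)⁻¹ - 1 = U / (1 - U) := by field_simp; ring
    linarith
  have hf_le : (1 - U) / U * Real.log (1 - U) ≤ U - 1 := by
    have h := mul_le_mul_of_nonneg_left hlog_le hfrac.le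
    have h3 : (1 - U) / U * (-U) = U - 1 := by field_simp; ring
    linarith
  have hf_ge : (-1 : ℝ) ≤ (1 - U) / U * Real.log (1 - U) := by
    have h := mul_le_mul_of_nonneg_left hlog_ge hfrac.le
    have h3 : (1 - U) / U * (-(U / (1 - U))) = -1 := by field_simp
    linarith
  have ha_lb : U * Real.exp (-1) ≤ AU := by
    show U * Real.exp (-1) ≤ U * (1 - U) ^ ((1 - U) / U)
    rw [hrw]
    exact mul_le_mul_of_nonneg_left (Real.exp_le_exp.mpr hf_ge) hU0.le
  have ha_ub : AU ≤ U * Real.exp (U - 1) := by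
    show U * (1 - U) ^ ((1 - U) / U) ≤ U * Real.exp (U - 1)
    rw [hrw]
    exact mul_le_mul_of_nonneg_left (Real.exp_le_exp.mpr hf_le) hU0.le
  have ha_pos : 0 < AU := lt_of_lt_of_le (by positivity) ha_lb
  have hexp1 : Real.exp (U - 1) ≤ 1 := Real.exp_le_one_iff.mpr (by linarith)
  have ha_le_U : AU ≤ U := le_trans ha_ub (by nlinarith [Real.exp_pos (U - 1)])
  -- exp U - 1 ≤ 2U
  have hmul : Real.exp U * Real.exp (-U) = 1 := by rw [← Real.exp_add]; simp
  have hE : 1 - U ≤ Real.exp (-U) := by linarith [Real.add_one_le_exp (-U)]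
  have hexpU : Real.exp U - 1 ≤ 2 * U := by
    have hepos := Real.exp_pos U
    have h4 : Real.exp U * (1 - U) ≤ 1 := by nlinarith
    nlinarith
  have he2 : (2 : ℝ) ≤ Real.exp 1 := by linarith [Real.add_one_le_exp (1 : ℝ)]
  have heinv : Real.exp (-1) ≤ 1 / 2 := by
    rw [Real.exp_neg]
    have h6 : Real.exp 1 * (Real.exp 1)⁻¹ = 1 := mul_inv_cancel₀ (Real.exp_pos 1).ne'
    nlinarith [Real.exp_pos 1, inv_pos.mpr (Real.exp_pos 1)]
  have hdiv : U / Real.exp 1 = U * Real.exp (-1) := by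
    rw [Real.exp_neg, div_eq_mul_inv]
  have hsub : Real.exp (U - 1) = Real.exp U * Real.exp (-1) := by
    rw [← Real.exp_add]; ring_nf
  have hs_le_a : sstar ≤ AU := div_le_self ha_pos.le (by linarith)
  have hdiff : AU - sstar = AU ^ 2 / (1 + AU) := by
    show AU - AU / (1 + AU) = AU ^ 2 / (1 + AU)
    field_simp
    ring
  have hdiff_le : AU - sstar ≤ U ^ 2 := by
    rw [hdiff]
    calc AU ^ 2 / (1 + AU) ≤ AU ^ 2 := div_le_self (sq_nonneg _) (by linarith)
      _ ≤ U ^ 2 := by nlinarith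
  have hup : sstar - U / Real.exp 1 ≤ U ^ 2 := by
    have hc : 0 ≤ U * Real.exp (-1) := by positivity
    have h5 : AU - U * Real.exp (-1) ≤ U * Real.exp (-1) * (Real.exp U - 1) := by
      rw [hsub] at ha_ub; nlinarith
    have h6 : U * Real.exp (-1) * (Real.exp U - 1) ≤ U * Real.exp (-1) * (2 * U) :=
      mul_le_mul_of_nonneg_left hexpU hc
    have h7 : U * Real.exp (-1) * (2 * U) ≤ U ^ 2 := by nlinarith [Real.exp_pos (-1)]
    rw [hdiv]
    linarith
  have hlo : -(U ^ 2) ≤ sstar - U / Real.exp 1 := by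
    rw [hdiv]
    linarith
  rw [abs_le]
  exact ⟨hlo, hup⟩
end

section
/- As U → 0⁺, R_bin(U) = −log(1−s*) with s* = A_U/(1+A_U), A_U = U(1−U)^((1−U)/U), satisfies R_bin(U) = U/e + (1/(2e) − 1/(2e²))·U² + O(U³). -/
open Real Filter Asymptotics

/-- The binary endpoint balanced KL risk `R_bin(U) = −log(1 − s*(U))`. -/
noncomputable def Rbin (U : ℝ) : ℝ :=
  -Real.log (1 - (U * (1 - U) ^ ((1 - U) / U)) / (1 + U * (1 - U) ^ ((1 - U) / U)))

lemma Rbin_eq_log (U : ℝ) (h0 : 0 < U) (h1 : U < 1) :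
    Rbin U = Real.log (1 + U * (1 - U) ^ ((1 - U) / U)) := by
  have hA : 0 ≤ U * (1 - U) ^ ((1 - U) / U) :=
    mul_nonneg h0.le (Real.rpow_nonneg (by linarith) _)
  set A := U * (1 - U) ^ ((1 - U) / U) with hAdef
  have h1A : 0 < 1 + A := by linarith
  have h2 : (1 : ℝ) - A / (1 + A) = (1 + A)⁻¹ := by field_simp; ring
  rw [Rbin, ← hAdef, h2, Real.log_inv, neg_neg]

set_option maxHeartbeats 1000000 in
lemma Rbin_key (U : ℝ) (h0 : 0 < U) (hU : U ≤ 1/2) :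
    |Rbin U - (U / Real.exp 1 +
      (1 / (2 * Real.exp 1) - 1 / (2 * (Real.exp 1) ^ 2)) * U ^ 2)| ≤ 100 * U ^ 3 := by
  have h1 : U < 1 := by linarith
  have hU1 : (0:ℝ) < 1 - U := by linarith
  -- helper power inequalities
  have h21 : U^2 ≤ U/2 := by nlinarith
  have h32 : U^3 ≤ U^2/2 := by nlinarith [sq_nonneg U]
  have h43 : U^4 ≤ U^3/2 := by nlinarith [pow_pos h0 3]
  have hp2 : (0:ℝ) < U^2 := pow_pos h0 2
  have hp3 : (0:ℝ) < U^3 := pow_pos h0 3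
  have hp4 : (0:ℝ) < U^4 := pow_pos h0 4
  have hp5 : (0:ℝ) < U^5 := pow_pos h0 5
  have hp6 : (0:ℝ) ≤ U^6 := by positivity
  set e := Real.exp 1 with hedef
  have he : 1 ≤ e := Real.one_le_exp zero_le_one
  have hepos : 0 < e := lt_of_lt_of_le one_pos he
  -- log Taylor remainder at order 4
  have hlt : |U| < 1 := by rw [abs_of_pos h0]; linarith
  have hlog := abs_log_sub_add_sum_range_le hlt 4
  rw [Finset.sum_range_succ, Finset.sum_range_succ, Finset.sum_range_succ,
    Finset.sum_range_succ, Finset.sum_range_zero] at hlog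
  norm_num at hlog
  rw [abs_of_pos h0] at hlog
  set r := U + U ^ 2 / 2 + U ^ 3 / 3 + U ^ 4 / 4 + Real.log (1 - U) with hrdef
  have hr : |r| ≤ 2 * U ^ 5 := by
    refine hlog.trans ?_
    rw [div_le_iff₀ (by linarith)]
    have hk : 0 ≤ U^5 * (1 - 2*U) := mul_nonneg hp5.le (by linarith)
    linarith
  obtain ⟨hr1, hr2⟩ := abs_le.mp hr
  set φ := (1 - U) / U * Real.log (1 - U) with hφdef
  set ψ := φ + 1 - U/2 - U^2/6 with hψdef
  have hident : ψ = U^3/12 + U^4/4 + (1 - U)/U * r := by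
    have hL : Real.log (1 - U) = r - (U + U ^ 2 / 2 + U ^ 3 / 3 + U ^ 4 / 4) := by
      rw [hrdef]; ring
    rw [hψdef, hφdef, hL]
    field_simp
    ring
  have hrq1 : (1 - U)/U * r ≤ 2 * U ^ 4 := by
    rw [div_mul_eq_mul_div, div_le_iff₀ h0]
    have e1 : (1-U)*r ≤ (1-U)*(2*U^5) :=
      mul_le_mul_of_nonneg_left hr2 (by linarith)
    linarith [e1, hp6]
  have hrq2 : -(2 * U ^ 4) ≤ (1 - U)/U * r := by
    rw [div_mul_eq_mul_div, le_div_iff₀ h0]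
    have e1 : (1-U)*(-(2*U^5)) ≤ (1-U)*r :=
      mul_le_mul_of_nonneg_left hr1 (by linarith)
    linarith [e1, hp6]
  have hψ1 : -(2 * U^3) ≤ ψ := by rw [hident]; linarith
  have hψ2 : ψ ≤ 2 * U^3 := by rw [hident]; linarith
  set t := U/2 + U^2/6 + ψ with htdef
  have ht2 : |t| ≤ 2 * U := by
    rw [abs_le, htdef]; constructor <;> linarith
  have ht1 : |t| ≤ 1 := ht2.trans (by linarith)
  -- exp Taylor remainder at order 3
  have hexp := Real.exp_bound ht1 (by norm_num : 0 < 3)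
  rw [Finset.sum_range_succ, Finset.sum_range_succ, Finset.sum_range_succ,
    Finset.sum_range_zero] at hexp
  norm_num [Nat.factorial] at hexp
  set ρ := Real.exp t - (1 + t + t^2/2) with hρdef
  have habs3 : |t| ^ 3 ≤ 8 * U ^ 3 := by
    calc |t| ^ 3 ≤ (2*U)^3 := pow_le_pow_left₀ (abs_nonneg t) ht2 3
    _ = 8 * U ^ 3 := by ring
  have hρb : |ρ| ≤ 2 * U ^ 3 := by
    rw [hρdef]
    refine hexp.trans ?_
    linarith
  obtain ⟨hρ1, hρ2⟩ := abs_le.mp hρb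
  -- A
  have hrpow : (1 - U) ^ ((1 - U) / U) = Real.exp φ := by
    rw [Real.rpow_def_of_pos hU1, hφdef, mul_comm]
  set A := U * (1 - U) ^ ((1 - U) / U) with hAdef
  have hApos : 0 < A := by
    rw [hAdef, hrpow]; positivity
  have hφle : φ ≤ 0 := by
    rw [hφdef]
    apply mul_nonpos_of_nonneg_of_nonpos
    · positivity
    · exact Real.log_nonpos (by linarith) (by linarith)
  have hAle : A ≤ U := by
    rw [hAdef, hrpow]
    calc U * Real.exp φ ≤ U * 1 :=
          mul_le_mul_of_nonneg_left (Real.exp_le_one_iff.mpr hφle) h0.le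
    _ = U := mul_one U
  -- A = U * exp t / e
  have hAeq : A = U * Real.exp t / e := by
    rw [hAdef, hrpow, hedef]
    have hφt : φ = t - 1 := by rw [htdef, hψdef]; ring
    rw [hφt, Real.exp_sub]
    ring
  -- log(1+A) second order bound
  have hAlt : |(-A)| < 1 := by rw [abs_neg, abs_of_pos hApos]; linarith
  have hlog2 := abs_log_sub_add_sum_range_le hAlt 2
  rw [Finset.sum_range_succ, Finset.sum_range_succ, Finset.sum_range_zero] at hlog2
  norm_num at hlog2
  rw [abs_of_pos hApos] at hlog2
  have hlogA : |Real.log (1 + A) - (A - A^2/2)| ≤ 2 * U ^ 3 := by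
    have heq1 : Real.log (1 + A) - (A - A^2/2) = -A + A^2/2 + Real.log (1 + A) := by ring
    rw [heq1]
    refine hlog2.trans ?_
    rw [div_le_iff₀ (by linarith)]
    have hA3 : A ^ 3 ≤ U ^ 3 := pow_le_pow_left₀ hApos.le hAle 3
    have hk : 0 ≤ U^3 * (1 - 2*A) := mul_nonneg hp3.le (by linarith)
    linarith [hA3, hk]
  obtain ⟨hlA1, hlA2⟩ := abs_le.mp hlogA
  clear_value r φ ψ t ρ A
  -- bound exp t - 1 - U/2
  have ht2sq : t^2 ≤ 4 * U^2 := by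
    have : |t|^2 ≤ (2*U)^2 := pow_le_pow_left₀ (abs_nonneg t) ht2 2
    calc t^2 = |t|^2 := (sq_abs t).symm
    _ ≤ (2*U)^2 := this
    _ = 4 * U^2 := by ring
  have hexpt : |Real.exp t - 1 - U/2| ≤ 5 * U ^ 2 := by
    have hE : Real.exp t - 1 - U/2 = U^2/6 + ψ + t^2/2 + ρ := by
      rw [hρdef, htdef]; ring
    rw [hE, abs_le]
    constructor <;> linarith [sq_nonneg t]
  -- D1
  have hD1 : |A - U/e - U^2/(2*e)| ≤ 5 * U^3 := by
    have hfac : A - U/e - U^2/(2*e) = (U/e) * (Real.exp t - 1 - U/2) := by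
      rw [hAeq]; field_simp
    rw [hfac, abs_mul, abs_of_pos (by positivity : (0:ℝ) < U/e)]
    have hUe : U/e ≤ U := div_le_self h0.le he
    calc U/e * |Real.exp t - 1 - U/2| ≤ U * (5*U^2) :=
          mul_le_mul hUe hexpt (abs_nonneg _) h0.le
    _ = 5 * U^3 := by ring
  obtain ⟨hD1a, hD1b⟩ := abs_le.mp hD1
  -- D2
  have h2e : 0 < U^2/(2*e) := by positivity
  have h2e' : U^2/(2*e) ≤ U^2/2 := by
    apply div_le_div_of_nonneg_left hp2.le (by norm_num) (by linarith)
  have hBb : |A - U/e| ≤ 4 * U^2 := by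
    rw [abs_le]
    constructor <;> linarith
  have hUe : U/e ≤ U := div_le_self h0.le he
  have hAs1 : 0 ≤ A + U/e := by positivity
  have hAs2 : A + U/e ≤ 2*U := by linarith
  have hD2 : |A^2/2 - U^2/(2*e^2)| ≤ 4 * U^3 := by
    have hfac : A^2/2 - U^2/(2*e^2) = (A - U/e) * (A + U/e) / 2 := by
      field_simp; ring
    rw [hfac, abs_div, abs_mul, abs_of_nonneg hAs1, abs_of_pos (by norm_num : (0:ℝ) < 2)]
    rw [div_le_iff₀ (by norm_num : (0:ℝ) < 2)]
    calc |A - U/e| * (A + U/e) ≤ (4*U^2) * (2*U) :=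
          mul_le_mul hBb hAs2 hAs1 (by positivity)
    _ = 4 * U^3 * 2 := by ring
  obtain ⟨hD2a, hD2b⟩ := abs_le.mp hD2
  -- combine
  have hfin : Rbin U - (U / e + (1 / (2 * e) - 1 / (2 * e ^ 2)) * U ^ 2)
      = (Real.log (1 + A) - (A - A^2/2)) + (A - U/e - U^2/(2*e))
        - (A^2/2 - U^2/(2*e^2)) := by
    rw [Rbin_eq_log U h0 h1, ← hAdef]
    field_simp
    ring
  rw [hfin, abs_le]
  constructor <;> linarith

/-- as `U → 0⁺`,
`R_bin(U) = U/e + (1/(2e) − 1/(2e²))·U² + O(U³)`. -/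
theorem Rbin_second_order :
    (fun U : ℝ =>
        Rbin U - (U / Real.exp 1 +
          (1 / (2 * Real.exp 1) - 1 / (2 * (Real.exp 1) ^ 2)) * U ^ 2))
      =O[nhdsWithin (0 : ℝ) (Set.Ioi 0)] (fun U : ℝ => U ^ 3) := by
  rw [isBigO_iff]
  refine ⟨100, ?_⟩
  have hev : Set.Ioo (0:ℝ) (1/2) ∈ nhdsWithin (0:ℝ) (Set.Ioi 0) :=
    Ioo_mem_nhdsGT_of_mem (by constructor <;> norm_num)
  filter_upwards [hev] with U hUmem
  have hkey := Rbin_key U hUmem.1 hUmem.2.le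
  rw [Real.norm_eq_abs, Real.norm_eq_abs, abs_of_pos (pow_pos hUmem.1 3)]
  exact hkey
end

section
/- With reserve s = U/e and the worst-case tail bound, the function G_U(t) = (1−t)log((1−t)/(1−s)) + t·log(U(1−t)/((1−U)s)) satisfies G_U(t) ≤ −(1−t)log(1−s) − t·log(1−U) for all t ∈ [0, U], and hence sup_{t∈[0,U]} G_U(t) ≤ U/e + O(U²) as U → 0⁺. -/
open Real Set

lemma neg_log_aux (x : ℝ) (hx0 : 0 ≤ x) (hx : x ≤ 1/4) : -Real.log (1 - x) ≤ x + x^2 := by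
  have h1 : (0:ℝ) < 1 - x := by linarith
  rw [neg_le]
  rw [Real.le_log_iff_exp_le h1]
  have hy : 0 ≤ x + x^2 := by positivity
  have h2 : 1 + (x + x^2)/2 ≤ Real.exp ((x + x^2)/2) := by
    linarith [Real.add_one_le_exp ((x + x^2)/2)]
  have h3 : (1 + (x + x^2)/2)^2 ≤ Real.exp (x + x^2) := by
    calc (1 + (x + x^2)/2)^2 ≤ (Real.exp ((x + x^2)/2))^2 := by nlinarith
    _ = Real.exp (x + x^2) := by rw [sq, ← Real.exp_add]; ring_nf
  have key : 1 ≤ Real.exp (x + x^2) * (1 - x) := by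
    have hpoly : 1 ≤ (1 + (x + x^2)/2)^2 * (1 - x) := by nlinarith [mul_nonneg (mul_nonneg hx0 hx0) hx0, mul_nonneg (mul_nonneg (mul_nonneg hx0 hx0) hx0) hx0, sq_nonneg x]
    nlinarith [sq_nonneg (1 + (x + x^2)/2)]
  have hpos := Real.exp_pos (x + x^2)
  rw [Real.exp_neg]
  rw [inv_le_iff_one_le_mul₀ hpos]
  linarith [key]

lemma G_eq (U t : ℝ) (hU0 : 0 < U) (hU1 : U < 1) (ht0 : 0 ≤ t) (htU : t ≤ U) :
    (1 - t) * Real.log ((1 - t) / (1 - U / Real.exp 1)) +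
      t * Real.log (U * (1 - t) / ((1 - U) * (U / Real.exp 1)))
    = Real.log (1 - t) + t - (1 - t) * Real.log (1 - U / Real.exp 1)
      - t * Real.log (1 - U) := by
  have he : (1:ℝ) < Real.exp 1 := by
    have := Real.add_one_le_exp (1:ℝ); linarith
  have hs0 : 0 < U / Real.exp 1 := by positivity
  have hs1 : U / Real.exp 1 < 1 := by
    calc U / Real.exp 1 < U / 1 := by
          apply div_lt_div_of_pos_left hU0 one_pos he
      _ = U := by ring
      _ < 1 := hU1
  have h1t : (0:ℝ) < 1 - t := by linarith
  have h1U : (0:ℝ) < 1 - U := by linarith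
  have h1s : (0:ℝ) < 1 - U / Real.exp 1 := by linarith
  have harg : U * (1 - t) / ((1 - U) * (U / Real.exp 1)) = Real.exp 1 * (1 - t) / (1 - U) := by
    field_simp
  rw [Real.log_div h1t.ne' h1s.ne', harg, Real.log_div (by positivity) h1U.ne',
    Real.log_mul (Real.exp_pos 1).ne' h1t.ne', Real.log_exp]
  ring

/-- with reserve `s = U/e`, the worst-case envelope
`G_U(t) = (1−t)log((1−t)/(1−s)) + t·log(U(1−t)/((1−U)s))` satisfies
`G_U(t) ≤ −(1−t)log(1−s) − t·log(1−U)` on `[0, U]`, and hence its supremum is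
at most `U/e + O(U²)` as `U → 0⁺`. -/
theorem envelope_bound :
    (∀ U : ℝ, 0 < U → U < 1 → ∀ t ∈ Icc (0 : ℝ) U,
      (1 - t) * Real.log ((1 - t) / (1 - U / Real.exp 1)) +
          t * Real.log (U * (1 - t) / ((1 - U) * (U / Real.exp 1))) ≤
        -(1 - t) * Real.log (1 - U / Real.exp 1) - t * Real.log (1 - U)) ∧
    (∃ C U₀ : ℝ, 0 < C ∧ 0 < U₀ ∧
      ∀ U : ℝ, 0 < U → U < U₀ → ∀ t ∈ Icc (0 : ℝ) U,
        (1 - t) * Real.log ((1 - t) / (1 - U / Real.exp 1)) +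
            t * Real.log (U * (1 - t) / ((1 - U) * (U / Real.exp 1))) ≤
          U / Real.exp 1 + C * U ^ 2) := by
  have main : ∀ U : ℝ, 0 < U → U < 1 → ∀ t ∈ Icc (0 : ℝ) U,
      (1 - t) * Real.log ((1 - t) / (1 - U / Real.exp 1)) +
          t * Real.log (U * (1 - t) / ((1 - U) * (U / Real.exp 1))) ≤
        -(1 - t) * Real.log (1 - U / Real.exp 1) - t * Real.log (1 - U) := by
    intro U hU0 hU1 t ht
    obtain ⟨ht0, htU⟩ := ht
    have h1t : (0:ℝ) < 1 - t := by linarith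
    rw [G_eq U t hU0 hU1 ht0 htU]
    have hlog : Real.log (1 - t) ≤ (1 - t) - 1 := Real.log_le_sub_one_of_pos h1t
    linarith
  refine ⟨main, 3, 1/4, by norm_num, by norm_num, ?_⟩
  intro U hU0 hU1 t ht
  have hU1' : U < 1 := by linarith
  have hmain := main U hU0 hU1' t ht
  obtain ⟨ht0, htU⟩ := ht
  have he : (1:ℝ) < Real.exp 1 := by
    have := Real.add_one_le_exp (1:ℝ); linarith
  have hs0 : 0 < U / Real.exp 1 := by positivity
  have hsU : U / Real.exp 1 ≤ U := by
    rw [div_le_iff₀ (by linarith)]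
    nlinarith
  have hA : -Real.log (1 - U / Real.exp 1) ≤ U / Real.exp 1 + (U / Real.exp 1)^2 :=
    neg_log_aux _ hs0.le (by linarith)
  have hB : -Real.log (1 - U) ≤ U + U^2 := neg_log_aux _ hU0.le (by linarith)
  have hApos : 0 ≤ -Real.log (1 - U / Real.exp 1) := by
    have : Real.log (1 - U / Real.exp 1) ≤ 0 := Real.log_nonpos (by linarith) (by linarith)
    linarith
  have hBpos : 0 ≤ -Real.log (1 - U) := by
    have : Real.log (1 - U) ≤ 0 := Real.log_nonpos (by linarith) (by linarith)
    linarith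
  have e1 : -(1 - t) * Real.log (1 - U / Real.exp 1) ≤ U / Real.exp 1 + (U / Real.exp 1)^2 := by
    have h1t : (1 - t) ≤ 1 := by linarith
    nlinarith
  have e2 : -(t * Real.log (1 - U)) ≤ U * (U + U^2) := by
    have : t * (-Real.log (1 - U)) ≤ U * (U + U^2) := by nlinarith
    linarith
  have hs2 : (U / Real.exp 1)^2 ≤ U^2 := by nlinarith
  nlinarith
end

section
/- Under the reference-aware model with per-token weight caps B_u = exp(min(τ, z_ref(u) + ρ)) and C_R = Σ_{u∉A} B_u, the TV diameter of the reference-aware identified set equals U_R = C_R/(Z_A + C_R), and U_R ≤ U_K since C_R ≤ M·exp(τ). -/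
open Finset Real

private lemma abs_sub_eq_add_sub_two_min (a b : ℝ) : |a - b| = a + b - 2 * min a b := by
  rcases le_total a b with h | h
  · rw [min_eq_left h, abs_of_nonpos (by linarith)]; ring
  · rw [min_eq_right h, abs_of_nonneg (by linarith)]; ring

/-- the reference-aware identified set (censored weights capped
by `B_u = exp(min(τ, z_ref(u)+ρ))`) has TV diameter exactly
`U_R = C_R/(Z_A + C_R)`, and `U_R ≤ U_K` since `C_R ≤ M·exp(τ)`. -/
theorem reference_aware_tv_diameter (V K : ℕ) (hK : 1 ≤ K) (hKV : K + 1 ≤ V)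
    (A : Finset (Fin V)) (hA : A.card = K)
    (z zref : Fin V → ℝ) (τ ρ : ℝ) (hρ : 0 < ρ)
    (ZA M CR UR UK : ℝ)
    (hZA : ZA = ∑ v ∈ A, Real.exp (z v))
    (hM : M = ((V - K : ℕ) : ℝ))
    (hCR : CR = ∑ u ∈ Aᶜ, Real.exp (min τ (zref u + ρ)))
    (hUR : UR = CR / (ZA + CR))
    (hUK : UK = M * Real.exp τ / (ZA + M * Real.exp τ)) :
    IsGreatest
      {d : ℝ |
        ∃ y y' : Fin V → ℝ,
          (∀ u ∉ A, 0 ≤ y u ∧ y u ≤ Real.exp (min τ (zref u + ρ))) ∧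
          (∀ u ∉ A, 0 ≤ y' u ∧ y' u ≤ Real.exp (min τ (zref u + ρ))) ∧
          d = (1 / 2) * ∑ v,
            |(if v ∈ A then Real.exp (z v) else y v) / (ZA + ∑ u ∈ Aᶜ, y u) -
             (if v ∈ A then Real.exp (z v) else y' v) / (ZA + ∑ u ∈ Aᶜ, y' u)|}
      UR
    ∧ UR ≤ UK := by
  have hAne : A.Nonempty := Finset.card_pos.mp (by rw [hA]; omega)
  have hAcne : (Aᶜ : Finset (Fin V)).Nonempty := Finset.card_pos.mp (by
    rw [Finset.card_compl, hA, Fintype.card_fin]; omega)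
  have hZA0 : 0 < ZA := hZA ▸ Finset.sum_pos (fun v _ => Real.exp_pos _) hAne
  have hCR0 : 0 < CR := hCR ▸ Finset.sum_pos (fun v _ => Real.exp_pos _) hAcne
  have hD0 : 0 < ZA + CR := by linarith
  refine ⟨⟨⟨fun u => Real.exp (min τ (zref u + ρ)), fun _ => 0, ?_, ?_, ?_⟩, ?_⟩, ?_⟩
  · intro u _; exact ⟨(Real.exp_pos _).le, le_rfl⟩
  · intro u _; exact ⟨le_rfl, (Real.exp_pos _).le⟩
  · -- value of the extremal pair equals UR
    have hs : (∑ u ∈ Aᶜ, Real.exp (min τ (zref u + ρ))) = CR := hCR.symm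
    have hz : (∑ u ∈ (Aᶜ : Finset (Fin V)), (0:ℝ)) = 0 := Finset.sum_const_zero
    rw [hs, hz, add_zero]
    have key : ∑ v : Fin V,
        |(if v ∈ A then Real.exp (z v) else Real.exp (min τ (zref v + ρ))) / (ZA + CR) -
         (if v ∈ A then Real.exp (z v) else (0:ℝ)) / ZA| = 2 * (CR / (ZA + CR)) := by
      rw [← Finset.sum_add_sum_compl A]
      have h1 : ∑ v ∈ A,
          |(if v ∈ A then Real.exp (z v) else Real.exp (min τ (zref v + ρ))) / (ZA + CR) -
           (if v ∈ A then Real.exp (z v) else (0:ℝ)) / ZA|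
          = ZA * (1 / ZA - 1 / (ZA + CR)) := by
        rw [Finset.sum_congr rfl (fun v hv => ?_), ← Finset.sum_mul, ← hZA]
        rw [if_pos hv, if_pos hv, abs_of_nonpos]
        · rw [div_eq_mul_one_div, div_eq_mul_one_div]; ring
        · have h : Real.exp (z v) / (ZA + CR) ≤ Real.exp (z v) / ZA :=
            div_le_div_of_nonneg_left (Real.exp_pos _).le hZA0 (by linarith)
          linarith
      have h2 : ∑ v ∈ Aᶜ,
          |(if v ∈ A then Real.exp (z v) else Real.exp (min τ (zref v + ρ))) / (ZA + CR) -
           (if v ∈ A then Real.exp (z v) else (0:ℝ)) / ZA| = CR / (ZA + CR) := by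
        rw [Finset.sum_congr rfl (fun v hv => ?_), ← Finset.sum_div, ← hCR]
        have hv' : v ∉ A := Finset.mem_compl.mp hv
        rw [if_neg hv', if_neg hv', zero_div, sub_zero,
          abs_of_nonneg (div_nonneg (Real.exp_pos _).le hD0.le)]
      rw [h1, h2]
      field_simp
      ring
    rw [key, hUR]; ring
  · -- upper bound
    rintro d ⟨y, y', hy, hy', rfl⟩
    set Y := ∑ u ∈ Aᶜ, y u with hYdef
    set Y' := ∑ u ∈ Aᶜ, y' u with hY'def
    have hY0 : 0 ≤ Y := Finset.sum_nonneg fun u hu => (hy u (Finset.mem_compl.mp hu)).1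
    have hY'0 : 0 ≤ Y' := Finset.sum_nonneg fun u hu => (hy' u (Finset.mem_compl.mp hu)).1
    have hYC : Y ≤ CR := hCR ▸ Finset.sum_le_sum fun u hu => (hy u (Finset.mem_compl.mp hu)).2
    have hY'C : Y' ≤ CR := hCR ▸ Finset.sum_le_sum fun u hu => (hy' u (Finset.mem_compl.mp hu)).2
    have hW0 : 0 < ZA + Y := by linarith
    have hW'0 : 0 < ZA + Y' := by linarith
    set p : Fin V → ℝ := fun v => (if v ∈ A then Real.exp (z v) else y v) / (ZA + Y) with hp
    set q : Fin V → ℝ := fun v => (if v ∈ A then Real.exp (z v) else y' v) / (ZA + Y') with hq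
    have hsum : ∀ (w : Fin V → ℝ),
        (∑ v : Fin V, (if v ∈ A then Real.exp (z v) else w v)) = ZA + ∑ u ∈ Aᶜ, w u := by
      intro w
      rw [← Finset.sum_add_sum_compl A, hZA]
      congr 1
      · exact Finset.sum_congr rfl fun v hv => if_pos hv
      · exact Finset.sum_congr rfl fun v hv => if_neg (Finset.mem_compl.mp hv)
    have hp1 : ∑ v : Fin V, p v = 1 := by
      rw [hp]; simp only [← Finset.sum_div]; rw [hsum y]; exact div_self hW0.ne'
    have hq1 : ∑ v : Fin V, q v = 1 := by
      rw [hq]; simp only [← Finset.sum_div]; rw [hsum y']; exact div_self hW'0.ne'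
    have hpnn : ∀ v, 0 ≤ p v := by
      intro v; apply div_nonneg _ hW0.le
      by_cases hv : v ∈ A
      · rw [if_pos hv]; exact (Real.exp_pos _).le
      · rw [if_neg hv]; exact (hy v hv).1
    have hqnn : ∀ v, 0 ≤ q v := by
      intro v; apply div_nonneg _ hW'0.le
      by_cases hv : v ∈ A
      · rw [if_pos hv]; exact (Real.exp_pos _).le
      · rw [if_neg hv]; exact (hy' v hv).1
    have hminA : ZA / (ZA + CR) ≤ ∑ v : Fin V, min (p v) (q v) := by
      have h1 : ∑ v ∈ A, min (p v) (q v) ≤ ∑ v : Fin V, min (p v) (q v) := by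
        apply Finset.sum_le_sum_of_subset_of_nonneg (Finset.subset_univ A)
        intro v _ _; exact le_min (hpnn v) (hqnn v)
      have h2 : ZA / (ZA + CR) ≤ ∑ v ∈ A, min (p v) (q v) := by
        rw [hZA, Finset.sum_div]
        apply Finset.sum_le_sum
        intro v hv
        apply le_min
        · rw [hp]; simp only [if_pos hv]
          apply div_le_div_of_nonneg_left (Real.exp_pos _).le hW0
          linarith
        · rw [hq]; simp only [if_pos hv]
          apply div_le_div_of_nonneg_left (Real.exp_pos _).le hW'0
          linarith
      linarith
    have habs : ∑ v : Fin V, |p v - q v| = 2 - 2 * ∑ v : Fin V, min (p v) (q v) := by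
      have : ∀ v : Fin V, |p v - q v| = p v + q v - 2 * min (p v) (q v) := fun v =>
        abs_sub_eq_add_sub_two_min _ _
      rw [Finset.sum_congr rfl fun v _ => this v, Finset.sum_sub_distrib,
        Finset.sum_add_distrib, hp1, hq1, ← Finset.mul_sum]
      ring
    have hfin : (1:ℝ)/2 * ∑ v : Fin V, |p v - q v| ≤ UR := by
      rw [habs, hUR]
      have : ZA / (ZA + CR) + CR / (ZA + CR) = 1 := by field_simp
      linarith
    exact hfin
  · -- UR ≤ UK
    have hCle : CR ≤ M * Real.exp τ := by
      rw [hCR, hM]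
      calc ∑ u ∈ Aᶜ, Real.exp (min τ (zref u + ρ))
          ≤ ∑ _u ∈ (Aᶜ : Finset (Fin V)), Real.exp τ :=
            Finset.sum_le_sum fun u _ => Real.exp_le_exp.mpr (min_le_left _ _)
        _ = ((V - K : ℕ) : ℝ) * Real.exp τ := by
            rw [Finset.sum_const, Finset.card_compl, hA, Fintype.card_fin, nsmul_eq_mul]
    have hMe0 : 0 < ZA + M * Real.exp τ := by linarith
    rw [hUR, hUK, div_le_div_iff₀ hD0 hMe0]
    nlinarith
end
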